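/- Let X be a real random variable with E X = 0, E X² = σ² ∈ (0,∞), and let F(x) = P(X < xσ). Suppose sup_x |F(x) − Φ(x)| ≤ δ for some δ ≥ 0, where Φ is the standard normal CDF. Then E|X| ≥ σ·(2∫₀^M Φ(−t) dt − 2δM) for every M > 0. -/

import Mathlib

open MeasureTheory ProbabilityTheory

noncomputable def stdNormalCDF (x : ℝ) : ℝ :=
  ((gaussianReal 0 1) (Set.Iic x)).toReal

/-!
By the layer-cake formula, `E(|X|/σ) = ∫₀^∞ P(|X|/σ ≥ t) dt`. For `t ≥ 0` the tail is at least
`F(-t) + 1 - F(t) ≥ Φ(-t) + 1 - Φ(t) - 2δ = 2Φ(-t) - 2δ`, using the symmetry `1 - Φ(t) = Φ(-t)`,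
and since the tail is nonnegative the integral over `[M, ∞)` may be dropped.
-/

open Set

lemma stdNormalCDF_eq_cdf : stdNormalCDF = cdf (gaussianReal 0 1) := by
  ext x
  rw [cdf_eq_real, stdNormalCDF, measureReal_def]

lemma monotone_stdNormalCDF : Monotone stdNormalCDF :=
  stdNormalCDF_eq_cdf ▸ (cdf _).mono

lemma stdNormalCDF_neg (t : ℝ) : stdNormalCDF (-t) = 1 - stdNormalCDF t := by
  set ν := gaussianReal 0 1
  have hsymm : ν.map (fun x ↦ -x) = ν := by
    rw [gaussianReal_map_neg, neg_zero]
  have hIic : ν (Iic (-t)) = ν (Ici t) := by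
    conv_lhs => rw [← hsymm]
    rw [Measure.map_apply measurable_neg measurableSet_Iic]
    congr 1
    ext x
    simp
  have hatom : ν {t} = 0 := gaussianReal_absolutelyContinuous 0 one_ne_zero (measure_singleton t)
  rw [stdNormalCDF, stdNormalCDF, hIic, ← compl_Iio, prob_compl_eq_one_sub measurableSet_Iio,
    measure_congr (Iio_ae_eq_Iic' hatom), ENNReal.toReal_sub_of_le prob_le_one ENNReal.one_ne_top,
    ENNReal.toReal_one]

section Tail

variable {Ω : Type*} [MeasurableSpace Ω] {μ : Measure Ω} {X : Ω → ℝ}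

lemma measureReal_lt_neg_add_one_sub_le_measureReal_le_abs [IsProbabilityMeasure μ]
    (hX : AEMeasurable X μ) {s : ℝ} (hs : 0 ≤ s) :
    μ.real {ω | X ω < -s} + (1 - μ.real {ω | X ω < s}) ≤ μ.real {ω | s ≤ |X ω|} := by
  have hcompl : {ω | X ω < s}ᶜ = {ω | s ≤ X ω} := by ext; simp
  have hdisj : Disjoint {ω | X ω < -s} {ω | s ≤ X ω} :=
    disjoint_left.2 fun ω h₁ h₂ ↦ by simp only [mem_ofPred_eq] at h₁ h₂; linarith
  rw [← probReal_compl_eq_one_sub₀ (s := {ω | X ω < s})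
      (hX.nullMeasurableSet_preimage measurableSet_Iio), hcompl,
    ← measureReal_union₀ (t := {ω | s ≤ X ω})
      (hX.nullMeasurableSet_preimage measurableSet_Ici) hdisj.aedisjoint]
  refine measureReal_mono fun ω hω ↦ ?_
  simp only [mem_union, mem_ofPred_eq] at hω ⊢
  rcases hω with h | h
  · linarith [neg_abs_le (X ω)]
  · linarith [le_abs_self (X ω)]

lemma MeasureTheory.Integrable.integrableOn_Ioi_measureReal_le (hX : Integrable X μ)
    (hX0 : 0 ≤ᵐ[μ] X) : IntegrableOn (fun t ↦ μ.real {ω | t ≤ X ω}) (Ioi 0) := by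
  have hanti : Antitone fun t ↦ μ {ω | t ≤ X ω} := fun s t hst ↦
    measure_mono fun ω hω ↦ hst.trans hω
  refine integrable_toReal_of_lintegral_ne_top hanti.measurable.aemeasurable ?_
  rw [← lintegral_eq_lintegral_meas_le μ hX0 hX.aemeasurable]
  exact hX.lintegral_lt_top.ne

lemma intervalIntegral_le_integral_of_le_measureReal_le (hX : Integrable X μ)
    (hX0 : 0 ≤ᵐ[μ] X) {φ : ℝ → ℝ} {a : ℝ} (ha : 0 ≤ a) (hφ : IntervalIntegrable φ volume 0 a)
    (hφX : ∀ t ∈ Ioc 0 a, φ t ≤ μ.real {ω | t ≤ X ω}) :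
    ∫ t in 0..a, φ t ≤ ∫ ω, X ω ∂μ := by
  have hg := hX.integrableOn_Ioi_measureReal_le hX0
  rw [hX.integral_eq_integral_meas_le hX0, intervalIntegral.integral_of_le ha]
  calc ∫ t in Ioc 0 a, φ t ≤ ∫ t in Ioc 0 a, μ.real {ω | t ≤ X ω} :=
        setIntegral_mono_on ((intervalIntegrable_iff_integrableOn_Ioc_of_le ha).1 hφ)
          (hg.mono_set Ioc_subset_Ioi_self) measurableSet_Ioc hφX
    _ ≤ ∫ t in Ioi 0, μ.real {ω | t ≤ X ω} :=
        setIntegral_mono_set hg (ae_of_all _ fun _ ↦ measureReal_nonneg)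
          Ioc_subset_Ioi_self.eventuallyLE

end Tail

theorem stmt13_general {Ω : Type*} [MeasureSpace Ω] [IsProbabilityMeasure (ℙ : Measure Ω)]
    (X : Ω → ℝ)
    (hXi : Integrable X)
    (σ : ℝ) (hσ : 0 < σ)
    (F : ℝ → ℝ) (hF : ∀ x, F x = (ℙ {ω | X ω < x * σ}).toReal)
    (δ : ℝ) (hδ : ∀ x, |F x - stdNormalCDF x| ≤ δ) :
    ∀ M > 0, σ * (2 * (∫ t in (0:ℝ)..M, stdNormalCDF (-t)) - 2 * δ * M) ≤
      ∫ ω, |X ω| := by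
  intro M hM
  have hΦ : IntervalIntegrable (fun t ↦ stdNormalCDF (-t)) volume 0 M :=
    (monotone_stdNormalCDF.comp_antitone fun _ _ h ↦ neg_le_neg h).intervalIntegrable
  have htail : ∀ t ∈ Ioc 0 M,
      2 * stdNormalCDF (-t) - 2 * δ ≤ (ℙ : Measure Ω).real {ω | t ≤ |X ω| / σ} := by
    intro t ht
    have hset : {ω | t ≤ |X ω| / σ} = {ω | t * σ ≤ |X ω|} := by
      ext ω; exact le_div_iff₀ hσ
    have h := measureReal_lt_neg_add_one_sub_le_measureReal_le_abs hXi.aemeasurable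
      (mul_nonneg ht.1.le hσ.le)
    rw [← neg_mul, measureReal_def, measureReal_def, ← hF, ← hF] at h
    rw [hset]
    linarith [(abs_le.1 (hδ (-t))).1, (abs_le.1 (hδ t)).2, stdNormalCDF_neg t]
  have hlower := intervalIntegral_le_integral_of_le_measureReal_le (hXi.abs.div_const σ)
    (ae_of_all _ fun ω ↦ by positivity) hM.le ((hΦ.const_mul 2).sub intervalIntegrable_const)
    htail
  calc σ * (2 * (∫ t in (0:ℝ)..M, stdNormalCDF (-t)) - 2 * δ * M)
      = σ * ∫ t in (0:ℝ)..M, (2 * stdNormalCDF (-t) - 2 * δ) := by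
        rw [intervalIntegral.integral_sub (hΦ.const_mul 2) intervalIntegrable_const,
          intervalIntegral.integral_const_mul, intervalIntegral.integral_const, smul_eq_mul]
        ring
    _ ≤ σ * ∫ ω, |X ω| / σ := by gcongr
    _ = ∫ ω, |X ω| := by rw [integral_div, mul_div_cancel₀ _ hσ.ne']

/-- Let `X` be a real random variable with `EX = 0`, `EX² = σ² ∈ (0,∞)`,
and `F(x) = P(X < xσ)`. If `sup_x |F(x) − Φ(x)| ≤ δ`, then for every `M > 0`,
`E|X| ≥ σ(2∫₀^M Φ(−t) dt − 2δM)`. -/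
theorem stmt13 {Ω : Type*} [MeasureSpace Ω] [IsProbabilityMeasure (ℙ : Measure Ω)]
    (X : Ω → ℝ) (hmeas : Measurable X)
    (hXi : Integrable X) (hX2 : Integrable (fun ω => X ω ^ 2))
    (hmean : ∫ ω, X ω = 0)
    (σ : ℝ) (hσ : 0 < σ) (hvar : ∫ ω, X ω ^ 2 = σ ^ 2)
    (F : ℝ → ℝ) (hF : ∀ x, F x = (ℙ {ω | X ω < x * σ}).toReal)
    (δ : ℝ) (hδ0 : 0 ≤ δ) (hδ : ∀ x, |F x - stdNormalCDF x| ≤ δ) :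
    ∀ M > 0, σ * (2 * (∫ t in (0:ℝ)..M, stdNormalCDF (-t)) - 2 * δ * M) ≤
      ∫ ω, |X ω| :=
  stmt13_general X hXi σ hσ F hF δ hδ
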